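/- Let 𝔤₁₈ be the Lie algebra with brackets [e₁,e₂]=e₄, [e₁,e₃]=e₅, [e₂,e₃]=e₆, and ω₁(λ) = e¹∧e⁶ + λ e²∧e⁵ + (λ−1)e³∧e⁴ with λ = −1, i.e. ω₁ = e¹∧e⁶ − e²∧e⁵ − 2e³∧e⁴. The structure J with J(e₂)=e₁, J(e₁)=−e₂, J(e₄)=b e₃, J(e₃)=−(1/b)e₄, J(e₆)=e₅, J(e₅)=−e₆ (b ≠ 0) is an integrable complex structure compatible with ω₁, and the lowered curvature tensor of g = ω₁∘J has unique nonzero component R(e₁,e₂,e₁,e₂) = 2b. -/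

import Mathlib

noncomputable section

/-- The underlying space ℝ⁶ of the Lie algebra 𝔤₁₈. -/
abbrev V18 : Type := Fin 6 → ℝ

/-- Standard basis vectors e₁,…,e₆ (0-indexed). -/
def e18 (i : Fin 6) : V18 := Pi.single i 1

/-- Bracket of 𝔤₁₈: [e₁,e₂]=e₄, [e₁,e₃]=e₅, [e₂,e₃]=e₆. -/
def br18 (X Y : V18) : V18 :=
  ![0, 0, 0,
    X 0 * Y 1 - X 1 * Y 0,
    X 0 * Y 2 - X 2 * Y 0,
    X 1 * Y 2 - X 2 * Y 1]

/-- ω₁ = e¹∧e⁶ − e²∧e⁵ − 2e³∧e⁴ (the form ω₁(λ) at λ = −1). -/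
def om18 (X Y : V18) : ℝ :=
  (X 0 * Y 5 - X 5 * Y 0) - (X 1 * Y 4 - X 4 * Y 1) - 2 * (X 2 * Y 3 - X 3 * Y 2)

/-- J(e₂)=e₁, J(e₁)=−e₂, J(e₄)=b·e₃, J(e₃)=−(1/b)·e₄, J(e₆)=e₅, J(e₅)=−e₆. -/
def J18 (b : ℝ) (X : V18) : V18 :=
  ![X 1, -X 0, b * X 3, -(1 / b) * X 2, X 5, -X 4]

/-- Associated metric g(X,Y) = ω₁(X, JY). -/
def g18 (b : ℝ) (X Y : V18) : ℝ := om18 X (J18 b Y)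

/-!
The metric `g = ω₁(·, J·)` is nondegenerate, so the Koszul formula pins down the Levi-Civita
connection; solving it on the basis gives the explicit bilinear map `levi18` below. Its curvature
is then a polynomial identity: `g(R(X,Y)Z, W) = 2b (e¹∧e²)(X,Y) (e¹∧e²)(Z,W)`, and `e¹∧e²`
vanishes on every pair of basis vectors other than `{e₁, e₂}`.
-/

def levi18 (b : ℝ) (X Y : V18) : V18 :=
  ![0, 0, b / 2 * (X 0 * Y 0 + X 1 * Y 1), (X 0 * Y 1 - X 1 * Y 0) / 2,
    X 0 * Y 2 - b * (X 1 * Y 3 + X 3 * Y 1), X 1 * Y 2 + b * (X 0 * Y 3 + X 3 * Y 0)]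

def curvature18 (nabla : V18 → V18 → V18) (X Y Z : V18) : V18 :=
  nabla X (nabla Y Z) - nabla Y (nabla X Z) - nabla (br18 X Y) Z

/-- The 2-form `e¹∧e²` (coordinates are 0-indexed). -/
def wedge01 (X Y : V18) : ℝ := X 0 * Y 1 - X 1 * Y 0

lemma J18_J18 {b : ℝ} (hb : b ≠ 0) (X : V18) : J18 b (J18 b X) = -X := by
  ext i
  fin_cases i <;> simp [J18] <;> field_simp

lemma nijenhuis_J18_eq_zero (b : ℝ) (X Y : V18) :
    br18 (J18 b X) (J18 b Y) - br18 X Y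
      - J18 b (br18 (J18 b X) Y) - J18 b (br18 X (J18 b Y)) = 0 := by
  ext i
  fin_cases i <;> simp [J18, br18] <;> ring

lemma om18_J18_J18 {b : ℝ} (hb : b ≠ 0) (X Y : V18) :
    om18 (J18 b X) (J18 b Y) = om18 X Y := by
  simp only [om18, J18, Matrix.cons_val]
  field_simp
  ring

lemma eq_of_g18_eq {b : ℝ} (hb : b ≠ 0) {v w : V18} (h : ∀ z, g18 b v z = g18 b w z) :
    v = w := by
  have hbasis : ∀ i, g18 b v (e18 i) = g18 b w (e18 i) := fun i => h (e18 i)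
  simp only [Fin.forall_fin_succ, IsEmpty.forall_iff] at hbasis
  simp [g18, om18, J18, e18, hb] at hbasis
  ext i
  fin_cases i <;> simp [hbasis]

lemma koszul_levi18 {b : ℝ} (hb : b ≠ 0) (X Y Z : V18) :
    2 * g18 b (levi18 b X Y) Z
      = g18 b (br18 X Y) Z + g18 b (br18 Z X) Y + g18 b X (br18 Z Y) := by
  simp only [g18, om18, J18, br18, levi18, Matrix.cons_val]
  field_simp
  ring

lemma eq_levi18_of_koszul {b : ℝ} (hb : b ≠ 0) (nabla : V18 → V18 → V18)
    (hkoszul : ∀ X Y Z : V18,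
      2 * g18 b (nabla X Y) Z = g18 b (br18 X Y) Z + g18 b (br18 Z X) Y + g18 b X (br18 Z Y)) :
    nabla = levi18 b := by
  funext X Y
  refine eq_of_g18_eq hb fun Z => ?_
  linarith [hkoszul X Y Z, koszul_levi18 hb X Y Z]

lemma g18_curvature18_levi18 (b : ℝ) (X Y Z W : V18) :
    g18 b (curvature18 (levi18 b) X Y Z) W = 2 * b * wedge01 X Y * wedge01 Z W := by
  simp only [g18, om18, J18, br18, levi18, curvature18, wedge01, Matrix.cons_val, Pi.sub_apply]
  ring

lemma wedge01_e18_zero_one : wedge01 (e18 0) (e18 1) = 1 := by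
  simp [wedge01, e18]

lemma wedge01_e18_eq_zero {i j : Fin 6} (h : ({i, j} : Finset (Fin 6)) ≠ {0, 1}) :
    wedge01 (e18 i) (e18 j) = 0 := by
  fin_cases i <;> fin_cases j <;> first | exact absurd (by decide) h | simp [wedge01, e18]

/-- for b ≠ 0, J is an integrable complex structure compatible with ω₁
on 𝔤₁₈, and the lowered curvature tensor of g = ω₁∘J has unique nonzero component
R(e₁,e₂,e₁,e₂) = 2b. -/
theorem g18_pseudoKaehler_curvature (b : ℝ) (hb : b ≠ 0) :
    (∀ X : V18, J18 b (J18 b X) = -X) ∧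
    (∀ X Y : V18,
      br18 (J18 b X) (J18 b Y) - br18 X Y
        - J18 b (br18 (J18 b X) Y) - J18 b (br18 X (J18 b Y)) = 0) ∧
    (∀ X Y : V18, om18 (J18 b X) (J18 b Y) = om18 X Y) ∧
    (∀ (nabla : V18 → V18 → V18),
      (∀ X Y Z : V18,
        2 * g18 b (nabla X Y) Z
          = g18 b (br18 X Y) Z + g18 b (br18 Z X) Y + g18 b X (br18 Z Y)) →
      ∀ (R : V18 → V18 → V18 → V18),
        (∀ X Y Z : V18,
          R X Y Z = nabla X (nabla Y Z) - nabla Y (nabla X Z) - nabla (br18 X Y) Z) →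
        g18 b (R (e18 0) (e18 1) (e18 0)) (e18 1) = 2 * b ∧
        (∀ i j k l : Fin 6,
          ¬(({i, j} : Finset (Fin 6)) = {0, 1} ∧ ({k, l} : Finset (Fin 6)) = {0, 1}) →
          g18 b (R (e18 i) (e18 j) (e18 k)) (e18 l) = 0)) := by
  refine ⟨J18_J18 hb, nijenhuis_J18_eq_zero b, om18_J18_J18 hb, ?_⟩
  intro nabla hkoszul R hR
  have hR_lowered : ∀ X Y Z W : V18,
      g18 b (R X Y Z) W = 2 * b * wedge01 X Y * wedge01 Z W := by
    intro X Y Z W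
    rw [hR, eq_levi18_of_koszul hb nabla hkoszul]
    exact g18_curvature18_levi18 b X Y Z W
  refine ⟨by simp [hR_lowered, wedge01_e18_zero_one], fun i j k l h => ?_⟩
  rw [hR_lowered]
  rcases not_and_or.mp h with hij | hkl
  · simp [wedge01_e18_eq_zero hij]
  · simp [wedge01_e18_eq_zero hkl]
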